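/- Suppose (f_j^R, f_j^I) satisfy condition H1 with constants λ_j^{RR}, λ_j^{RI}, λ_j^{IR}, λ_j^{II} and (g_j^R, g_j^I) satisfy condition H2 with constants μ_j^{RR}, μ_j^{RI}, μ_j^{IR}, μ_j^{II}, for j = 1,…,n. Suppose there exist positive reals ξ_1,…,ξ_n, φ_1,…,φ_n and ε > 0 such that for every k = 1,…,n both: (i) ξ_k(−d_k + ε) + [ξ_k a_{kk}^R + Σ_{j≠k} ξ_j|a_{jk}^R| + Σ_{j=1}^n φ_j|a_{jk}^I|]⁺ λ_k^{RR} + [−ξ_k a_{kk}^I + Σ_{j≠k} ξ_j|a_{jk}^I| + Σ_{j=1}^n φ_j|a_{jk}^R|]⁺ λ_k^{IR} + Σ_{j=1}^n (ξ_j(|b_{jk}^R|μ_k^{RR} + |b_{jk}^I|μ_k^{IR}) + φ_j(|b_{jk}^R|μ_k^{IR} + |b_{jk}^I|μ_k^{RR})) e^{ε τ_{jk}} ≤ 0, and (ii) φ_k(−d_k + ε) + [φ_k a_{kk}^R + Σ_{j≠k} φ_j|a_{jk}^R| + Σ_{j=1}^n ξ_j|a_{jk}^I|]⁺ λ_k^{II}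 + [φ_k a_{kk}^I + Σ_{j≠k} φ_j|a_{jk}^I| + Σ_{j=1}^n ξ_j|a_{jk}^R|]⁺ λ_k^{RI} + Σ_{j=1}^n (ξ_j(|b_{jk}^R|μ_k^{RI} + |b_{jk}^I|μ_k^{II}) + φ_j(|b_{jk}^R|μ_k^{II} + |b_{jk}^I|μ_k^{RI})) e^{ε τ_{jk}} ≤ 0. If the network admits at least one solution, then it has exactly one equilibrium Z̄ ∈ ℝ^{2n}, and for every solution Z(t) there is a constant c > 0 such that ‖Z(t) − Z̄‖_{ξ,1} ≤ c e^{−εt} and ‖(d/dt)Z(t)‖_{ξ,1} ≤ c e^{−εt} for all t ≥ 0. -/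

import Mathlib

open Finset

/-- A solution of the delayed complex-valued network, decomposed into real and
imaginary parts. -/
def IsSolution (n : ℕ) (d : Fin n → ℝ)
    (aR aI bR bI τ : Fin n → Fin n → ℝ)
    (uR uI : Fin n → ℝ)
    (fR fI gR gI : Fin n → ℝ → ℝ → ℝ)
    (zR zI : Fin n → ℝ → ℝ) : Prop :=
  (∀ j, ContDiff ℝ 1 (zR j)) ∧ (∀ j, ContDiff ℝ 1 (zI j)) ∧
  (∀ j : Fin n, ∀ t : ℝ, 0 ≤ t →
    deriv (zR j) t =
      -(d j) * zR j t
      + (∑ k, (aR j k * fR k (zR k t) (zI k t) - aI j k * fI k (zR k t) (zI k t)))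
      + (∑ k, (bR j k * gR k (zR k (t - τ j k)) (zI k (t - τ j k))
               - bI j k * gI k (zR k (t - τ j k)) (zI k (t - τ j k))))
      + uR j) ∧
  (∀ j : Fin n, ∀ t : ℝ, 0 ≤ t →
    deriv (zI j) t =
      -(d j) * zI j t
      + (∑ k, (aR j k * fI k (zR k t) (zI k t) + aI j k * fR k (zR k t) (zI k t)))
      + (∑ k, (bR j k * gI k (zR k (t - τ j k)) (zI k (t - τ j k))
               + bI j k * gR k (zR k (t - τ j k)) (zI k (t - τ j k))))
      + uI j)

/-- An equilibrium of the network: a point of ℝ^{2n} at which both right-hand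
sides vanish. -/
def IsEquilibrium (n : ℕ) (d : Fin n → ℝ)
    (aR aI bR bI : Fin n → Fin n → ℝ)
    (uR uI : Fin n → ℝ)
    (fR fI gR gI : Fin n → ℝ → ℝ → ℝ)
    (zbR zbI : Fin n → ℝ) : Prop :=
  (∀ j : Fin n,
    -(d j) * zbR j
    + (∑ k, (aR j k * fR k (zbR k) (zbI k) - aI j k * fI k (zbR k) (zbI k)))
    + (∑ k, (bR j k * gR k (zbR k) (zbI k) - bI j k * gI k (zbR k) (zbI k)))
    + uR j = 0) ∧
  (∀ j : Fin n,
    -(d j) * zbI j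
    + (∑ k, (aR j k * fI k (zbR k) (zbI k) + aI j k * fR k (zbR k) (zbI k)))
    + (∑ k, (bR j k * gI k (zbR k) (zbI k) + bI j k * gR k (zbR k) (zbI k)))
    + uI j = 0)

/-- Condition H1: continuously differentiable with positive, bounded partial
derivatives. -/
def CondH1 (f1 f2 : ℝ → ℝ → ℝ) (lRR lRI lIR lII : ℝ) : Prop :=
  ContDiff ℝ 1 (fun p : ℝ × ℝ => f1 p.1 p.2) ∧
  ContDiff ℝ 1 (fun p : ℝ × ℝ => f2 p.1 p.2) ∧
  (∀ x y : ℝ,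
    (0 < deriv (fun s => f1 s y) x ∧ deriv (fun s => f1 s y) x ≤ lRR) ∧
    (0 < deriv (fun s => f1 x s) y ∧ deriv (fun s => f1 x s) y ≤ lRI) ∧
    (0 < deriv (fun s => f2 s y) x ∧ deriv (fun s => f2 s y) x ≤ lIR) ∧
    (0 < deriv (fun s => f2 x s) y ∧ deriv (fun s => f2 x s) y ≤ lII))

/-- Condition H2: continuously differentiable with bounded partial derivatives. -/
def CondH2 (g1 g2 : ℝ → ℝ → ℝ) (mRR mRI mIR mII : ℝ) : Prop :=
  ContDiff ℝ 1 (fun p : ℝ × ℝ => g1 p.1 p.2) ∧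
  ContDiff ℝ 1 (fun p : ℝ × ℝ => g2 p.1 p.2) ∧
  (∀ x y : ℝ,
    |deriv (fun s => g1 s y) x| ≤ mRR ∧
    |deriv (fun s => g1 x s) y| ≤ mRI ∧
    |deriv (fun s => g2 s y) x| ≤ mIR ∧
    |deriv (fun s => g2 x s) y| ≤ mII)

/-!
Along a solution, `X = z'` solves a linear delayed system whose coefficients are partial
derivatives of the activations, bounded by H1 and H2. For such a system the functional
`V t = e^{εt} ‖X t‖_{ξ,1} + Σ_{j,k} e^{ετ_jk} ∫_{t-τ_jk}^t c_jk(s) e^{εs} ds` has nonpositive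
right Dini derivative: the derivatives of `f` being positive, each diagonal entry `a_kk` enters
with its sign, and the column conditions (i), (ii) absorb everything else. Hence
`‖z' t‖ ≤ c e^{-εt}`, so `z t` converges exponentially fast, and its limit is an equilibrium. Two
equilibria are compared in the same way, with the mean value theorem in place of the chain rule,
and the column conditions force their weighted distance to vanish.
-/

open Filter Topology

/-- The upper right Dini derivative of `f` at `t` is at most `D`. -/
def RightDiniLE (f : ℝ → ℝ) (t D : ℝ) : Prop :=
  ∀ r, D < r → ∀ᶠ z in 𝓝[>] t, slope f t z < r

section RightDini

variable {f g : ℝ → ℝ} {t D E : ℝ}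

theorem HasDerivAt.rightDiniLE {f' : ℝ} (hf : HasDerivAt f f' t) : RightDiniLE f t f' :=
  fun _ hr =>
    ((hasDerivAt_iff_tendsto_slope.1 hf).mono_left (nhdsGT_le_nhdsNE t)).eventually_lt_const hr

theorem RightDiniLE.mono (hf : RightDiniLE f t D) (hDE : D ≤ E) : RightDiniLE f t E :=
  fun r hr => hf r (hDE.trans_lt hr)

theorem RightDiniLE.add (hf : RightDiniLE f t D) (hg : RightDiniLE g t E) :
    RightDiniLE (fun z => f z + g z) t (D + E) := by
  intro r hr
  filter_upwards [hf (D + (r - D - E) / 2) (by linarith),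
    hg (E + (r - D - E) / 2) (by linarith)] with z hfz hgz
  rw [slope_def_field] at *
  rw [show (f z + g z - (f t + g t)) / (z - t) = (f z - f t) / (z - t) + (g z - g t) / (z - t) by
    ring]
  linarith

theorem RightDiniLE.const_mul (hf : RightDiniLE f t D) {c : ℝ} (hc : 0 ≤ c) :
    RightDiniLE (fun z => c * f z) t (c * D) := by
  intro r hr
  rcases hc.eq_or_lt with rfl | hc
  · exact Eventually.of_forall fun z => by simpa [slope_def_field] using hr
  filter_upwards [hf (r / c) (by rwa [lt_div_iff₀' hc])] with z hz
  rw [slope_def_field] at *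
  rw [← mul_sub, mul_div_assoc]
  rwa [lt_div_iff₀' hc] at hz

theorem RightDiniLE.sum {ι : Type*} (s : Finset ι) {f : ι → ℝ → ℝ} {D : ι → ℝ}
    (h : ∀ i ∈ s, RightDiniLE (f i) t (D i)) :
    RightDiniLE (fun z => ∑ i ∈ s, f i z) t (∑ i ∈ s, D i) := by
  classical
  induction s using Finset.induction_on with
  | empty => simpa using (hasDerivAt_const t (0 : ℝ)).rightDiniLE
  | insert i s hi ih =>
    simp only [sum_insert hi]
    exact (h i (mem_insert_self i s)).add (ih fun j hj => h j (mem_insert_of_mem hj))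

theorem abs_sign_le_one (x : ℝ) : |(SignType.sign x : ℝ)| ≤ 1 := by
  rcases lt_trichotomy x 0 with h | h | h <;> simp [h]

/-- At a zero of `u` the right Dini derivative of `|u|` is `|u'|`; elsewhere `|u|` is
differentiable with derivative `sign (u t) * u'`. -/
theorem exists_rightDiniLE_abs {u : ℝ → ℝ} {u' : ℝ} (hu : HasDerivAt u u' t) :
    ∃ σ : ℝ, |σ| ≤ 1 ∧ σ * u t = |u t| ∧ RightDiniLE (fun z => |u z|) t (σ * u') := by
  by_cases h : u t = 0
  · refine ⟨SignType.sign u', abs_sign_le_one u', by simp [h], fun r hr => ?_⟩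
    rw [sign_mul_self] at hr
    have hslope := ((hasDerivAt_iff_tendsto_slope.1 hu).mono_left (nhdsGT_le_nhdsNE t)).abs
    filter_upwards [hslope.eventually_lt_const hr, self_mem_nhdsWithin] with z hz hzt
    have hzt : 0 < z - t := sub_pos.2 hzt
    rw [slope_def_field, h, sub_zero, abs_div, abs_of_pos hzt] at hz
    rwa [slope_def_field, h, abs_zero, sub_zero]
  · exact ⟨SignType.sign (u t), abs_sign_le_one _, sign_mul_self _,
      ((hasDerivAt_abs h).comp t hu).rightDiniLE⟩

theorem le_of_rightDiniLE_zero {V : ℝ → ℝ} (hV : Continuous V)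
    (hd : ∀ t, 0 < t → RightDiniLE V t 0) {t : ℝ} (ht : 0 ≤ t) : V t ≤ V 0 := by
  have key : ∀ a, 0 < a → a ≤ t → V t ≤ V a := fun a ha hat =>
    image_le_of_liminf_slope_right_le_deriv_boundary (B := fun _ => V a) (B' := fun _ => 0)
      hV.continuousOn le_rfl continuousOn_const (fun _ _ => hasDerivWithinAt_const _ _ _)
      (fun x hx r hr => (hd x (ha.trans_le hx.1) r hr).frequently) ⟨hat, le_rfl⟩
  rcases ht.eq_or_lt with rfl | ht
  · rfl
  refine ge_of_tendsto (hV.continuousWithinAt (s := Set.Ioi 0) (x := 0)) ?_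
  filter_upwards [Ioo_mem_nhdsGT ht] with a ha
  exact key a ha.1 ha.2.le

end RightDini

section Calculus

noncomputable def dirDeriv (f : ℝ → ℝ → ℝ) (x y x' y' : ℝ) : ℝ :=
  deriv (fun s => f s y) x * x' + deriv (fun s => f x s) y * y'

theorem HasDerivAt.comp₂ {f : ℝ → ℝ → ℝ} {x y : ℝ → ℝ} {x' y' t : ℝ}
    (hf : DifferentiableAt ℝ (fun p : ℝ × ℝ => f p.1 p.2) (x t, y t))
    (hx : HasDerivAt x x' t) (hy : HasDerivAt y y' t) :
    HasDerivAt (fun s => f (x s) (y s)) (dirDeriv f (x t) (y t) x' y') t := by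
  set L := fderiv ℝ (fun p : ℝ × ℝ => f p.1 p.2) (x t, y t)
  have h₁ : HasDerivAt (fun s => f s (y t)) (L (1, 0)) (x t) := by
    have := hf.hasFDerivAt.comp_hasDerivAt (x t)
      ((hasDerivAt_id (x t)).prodMk (hasDerivAt_const (x t) (y t)))
    exact this
  have h₂ : HasDerivAt (fun s => f (x t) s) (L (0, 1)) (y t) := by
    have := hf.hasFDerivAt.comp_hasDerivAt (y t)
      ((hasDerivAt_const (y t) (x t)).prodMk (hasDerivAt_id (y t)))
    exact this
  have hL : L (x', y') = L (1, 0) * x' + L (0, 1) * y' := by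
    rw [show ((x', y') : ℝ × ℝ) = x' • ((1 : ℝ), (0 : ℝ)) + y' • ((0 : ℝ), (1 : ℝ)) by simp,
      map_add, map_smul, map_smul, smul_eq_mul, smul_eq_mul, mul_comm x', mul_comm y']
  rw [dirDeriv, h₁.deriv, h₂.deriv, ← hL]
  exact hf.hasFDerivAt.comp_hasDerivAt t (hx.prodMk hy)

theorem exists_deriv_mul_sub {f : ℝ → ℝ} (hf : Differentiable ℝ f) (x x' : ℝ) :
    ∃ c, f x - f x' = deriv f c * (x - x') := by
  have mvt : ∀ a b, a < b → ∃ c, f b - f a = deriv f c * (b - a) := fun a b hab => by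
    obtain ⟨c, -, hc⟩ := exists_deriv_eq_slope f hab hf.continuous.continuousOn
      hf.differentiableOn
    exact ⟨c, by rw [hc, div_mul_cancel₀ _ (sub_ne_zero.2 hab.ne')]⟩
  rcases lt_trichotomy x x' with h | rfl | h
  · obtain ⟨c, hc⟩ := mvt x x' h
    exact ⟨c, by linear_combination -hc⟩
  · exact ⟨x, by ring⟩
  · exact mvt x' x h

theorem exists_partial_derivs_mul_sub {f : ℝ → ℝ → ℝ}
    (hf : Differentiable ℝ (fun p : ℝ × ℝ => f p.1 p.2)) (x y x' y' : ℝ) :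
    ∃ c c', f x y - f x' y' =
      deriv (fun s => f s y) c * (x - x') + deriv (fun s => f x' s) c' * (y - y') := by
  obtain ⟨c, hc⟩ := exists_deriv_mul_sub (f := fun s => f s y)
    (fun s => hf.differentiableAt.comp s (differentiableAt_id.prodMk (differentiableAt_const y)))
    x x'
  obtain ⟨c', hc'⟩ := exists_deriv_mul_sub (f := fun s => f x' s)
    (fun s => hf.differentiableAt.comp s ((differentiableAt_const x').prodMk differentiableAt_id))
    y y'
  exact ⟨c, c', by linear_combination hc + hc'⟩

theorem hasDerivAt_integral_sub {h : ℝ → ℝ} (hh : Continuous h) (c t : ℝ) :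
    HasDerivAt (fun z => ∫ s in z - c..z, h s) (h t - h (t - c)) t := by
  have hF := fun z => (hh.integral_hasStrictDerivAt 0 z).hasDerivAt
  have hsub : (fun z => ∫ s in z - c..z, h s) =
      fun z => (∫ s in (0 : ℝ)..z, h s) - ∫ s in (0 : ℝ)..(z - c), h s := by
    funext z
    rw [intervalIntegral.integral_interval_sub_left (hh.intervalIntegrable _ _)
      (hh.intervalIntegrable _ _)]
  rw [hsub]
  exact (hF t).sub ((hF (t - c)).comp_sub_const t c)

/-- `f + (A/ε) e^{-εt}` is antitone and `f - (A/ε) e^{-εt}` monotone on `[0, ∞)`; `L` is squeezed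
between them. -/
theorem exists_abs_sub_le_of_abs_deriv_le {f : ℝ → ℝ} {A ε : ℝ} (hε : 0 < ε)
    (hf : Differentiable ℝ f) (hbd : ∀ t, 0 ≤ t → |deriv f t| ≤ A * Real.exp (-ε * t)) :
    ∃ L, ∀ t, 0 ≤ t → |f t - L| ≤ A / ε * Real.exp (-ε * t) := by
  set e : ℝ → ℝ := fun t => A / ε * Real.exp (-ε * t)
  have he : ∀ t, HasDerivAt e (-(A * Real.exp (-ε * t))) t := fun t => by
    refine ((((hasDerivAt_id t).const_mul (-ε)).exp).const_mul (A / ε)).congr_deriv ?_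
    field_simp
    simp
  have hA : 0 ≤ A := by simpa using (abs_nonneg _).trans (hbd 0 le_rfl)
  have he0 : ∀ t, 0 ≤ e t := fun t => by positivity
  have hfd := fun t => (hf t).hasDerivAt
  have hgd : Differentiable ℝ (fun t => f t + e t) := hf.add fun t => (he t).differentiableAt
  have hhd : Differentiable ℝ (fun t => f t - e t) := hf.sub fun t => (he t).differentiableAt
  have hg : AntitoneOn (fun t => f t + e t) (Set.Ici 0) := by
    refine antitoneOn_of_deriv_nonpos (convex_Ici 0) hgd.continuous.continuousOn
      hgd.differentiableOn fun t ht => ?_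
    rw [interior_Ici] at ht
    rw [((hfd t).fun_add (he t)).deriv]
    linarith [(abs_le.1 (hbd t ht.le)).2]
  have hh : MonotoneOn (fun t => f t - e t) (Set.Ici 0) := by
    refine monotoneOn_of_deriv_nonneg (convex_Ici 0) hhd.continuous.continuousOn
      hhd.differentiableOn fun t ht => ?_
    rw [interior_Ici] at ht
    rw [((hfd t).fun_sub (he t)).deriv]
    linarith [(abs_le.1 (hbd t ht.le)).1]
  have hhg : ∀ t, 0 ≤ t → ∀ s, 0 ≤ s → f t - e t ≤ f s + e s := fun t ht s hs => by
    rcases le_total t s with hts | hst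
    · linarith [hh ht hs hts, he0 s]
    · linarith [hg hs ht hst, he0 t]
  set S := (fun s => f s + e s) '' Set.Ici 0
  refine ⟨sInf S, fun t ht => abs_sub_le_iff.2 ⟨?_, ?_⟩⟩
  · have : f t - e t ≤ sInf S := le_csInf (Set.image_nonempty.2 Set.nonempty_Ici)
      (Set.forall_mem_image.2 fun s hs => hhg t ht s hs)
    change _ ≤ e t
    linarith
  · have : sInf S ≤ f t + e t := csInf_le ⟨f 0 - e 0, Set.forall_mem_image.2 fun s hs =>
      hhg 0 le_rfl s hs⟩ (Set.mem_image_of_mem _ ht)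
    change _ ≤ e t
    linarith

theorem tendsto_of_abs_sub_le_exp {f : ℝ → ℝ} {L A ε : ℝ} (hε : 0 < ε)
    (h : ∀ t, 0 ≤ t → |f t - L| ≤ A * Real.exp (-ε * t)) : Tendsto f atTop (𝓝 L) := by
  have h₀ : Tendsto (fun t => A * Real.exp (-ε * t)) atTop (𝓝 0) := by
    simpa [neg_mul] using
      (Real.tendsto_exp_neg_atTop_nhds_zero.comp (tendsto_id.const_mul_atTop hε)).const_mul A
  exact tendsto_iff_norm_sub_tendsto_zero.2
    (squeeze_zero_norm' ((eventually_ge_atTop 0).mono fun t ht => by simpa using h t ht) h₀)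

end Calculus

section Algebra

variable {n : ℕ}

/-- The real part of the right-hand side minus the input `uR`, with the activations abstracted:
`F₁ k`, `F₂ k` stand for `fR`, `fI` at `z_k(t)` and `G₁ j k`, `G₂ j k` for `gR`, `gI` at
`z_k(t - τ j k)`. Being linear in all its arguments, it also describes the difference of two
states and the derivative along a solution. -/
def netR (d : Fin n → ℝ) (aR aI bR bI : Fin n → Fin n → ℝ) (x F₁ F₂ : Fin n → ℝ)
    (G₁ G₂ : Fin n → Fin n → ℝ) (j : Fin n) : ℝ :=
  -(d j) * x j + (∑ k, (aR j k * F₁ k - aI j k * F₂ k))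
    + (∑ k, (bR j k * G₁ j k - bI j k * G₂ j k))

def netI (d : Fin n → ℝ) (aR aI bR bI : Fin n → Fin n → ℝ) (y F₁ F₂ : Fin n → ℝ)
    (G₁ G₂ : Fin n → Fin n → ℝ) (j : Fin n) : ℝ :=
  -(d j) * y j + (∑ k, (aR j k * F₂ k + aI j k * F₁ k))
    + (∑ k, (bR j k * G₂ j k + bI j k * G₁ j k))

def weightedNorm (ξ φ x y : Fin n → ℝ) : ℝ :=
  (∑ j, ξ j * |x j|) + (∑ j, φ j * |y j|)

/-- The brackets `[c₁_k a₁_kk + Σ_{j ≠ k} c₁_j |a₁_jk| + Σ_j c₂_j |a₂_jk|]` of the column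
conditions, for the `k`-th columns `a₁ = a₁_·k`, `a₂ = a₂_·k`. -/
def colSum (c₁ c₂ a₁ a₂ : Fin n → ℝ) (k : Fin n) : ℝ :=
  c₁ k * a₁ k + (∑ j ∈ univ.erase k, c₁ j * |a₁ j|) + (∑ j, c₂ j * |a₂ j|)

/-- Condition (i) of the theorem reads
`ξ k * (-(d k) + ε) + gainR … k + ∑ j, delayR … j k * exp (ε * τ j k) ≤ 0`, and condition (ii)
likewise with `gainI` and `delayI`. -/
def gainR (ξ φ : Fin n → ℝ) (aR aI : Fin n → Fin n → ℝ) (lRR lIR : Fin n → ℝ) (k : Fin n) : ℝ :=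
  max (colSum ξ φ (aR · k) (aI · k) k) 0 * lRR k
    + max (colSum ξ φ (-aI · k) (aR · k) k) 0 * lIR k

def gainI (ξ φ : Fin n → ℝ) (aR aI : Fin n → Fin n → ℝ) (lII lRI : Fin n → ℝ) (k : Fin n) : ℝ :=
  max (colSum φ ξ (aR · k) (aI · k) k) 0 * lII k
    + max (colSum φ ξ (aI · k) (aR · k) k) 0 * lRI k

def delayR (ξ φ : Fin n → ℝ) (bR bI : Fin n → Fin n → ℝ) (mRR mIR : Fin n → ℝ) (j k : Fin n) :
    ℝ :=
  ξ j * (|bR j k| * mRR k + |bI j k| * mIR k) + φ j * (|bR j k| * mIR k + |bI j k| * mRR k)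

def delayI (ξ φ : Fin n → ℝ) (bR bI : Fin n → Fin n → ℝ) (mRI mII : Fin n → ℝ) (j k : Fin n) :
    ℝ :=
  ξ j * (|bR j k| * mRI k + |bI j k| * mII k) + φ j * (|bR j k| * mII k + |bI j k| * mRI k)

theorem weightedNorm_nonneg {ξ φ : Fin n → ℝ} (hξ : ∀ j, 0 ≤ ξ j) (hφ : ∀ j, 0 ≤ φ j)
    (x y : Fin n → ℝ) : 0 ≤ weightedNorm ξ φ x y :=
  add_nonneg (sum_nonneg fun i _ => mul_nonneg (hξ i) (abs_nonneg (x i)))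
    (sum_nonneg fun i _ => mul_nonneg (hφ i) (abs_nonneg (y i)))

theorem mul_abs_le_weightedNorm_left {ξ φ : Fin n → ℝ} (hξ : ∀ j, 0 ≤ ξ j) (hφ : ∀ j, 0 ≤ φ j)
    (x y : Fin n → ℝ) (j : Fin n) : ξ j * |x j| ≤ weightedNorm ξ φ x y :=
  (single_le_sum (fun i _ => mul_nonneg (hξ i) (abs_nonneg (x i))) (mem_univ j)).trans
    (le_add_of_nonneg_right (sum_nonneg fun i _ => mul_nonneg (hφ i) (abs_nonneg (y i))))

theorem mul_abs_le_weightedNorm_right {ξ φ : Fin n → ℝ} (hξ : ∀ j, 0 ≤ ξ j) (hφ : ∀ j, 0 ≤ φ j)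
    (x y : Fin n → ℝ) (j : Fin n) : φ j * |y j| ≤ weightedNorm ξ φ x y :=
  (single_le_sum (fun i _ => mul_nonneg (hφ i) (abs_nonneg (y i))) (mem_univ j)).trans
    (le_add_of_nonneg_left (sum_nonneg fun i _ => mul_nonneg (hξ i) (abs_nonneg (x i))))

theorem weightedNorm_le_of_forall {ξ φ x y : Fin n → ℝ} {B : ℝ} (hx : ∀ j, ξ j * |x j| ≤ B)
    (hy : ∀ j, φ j * |y j| ≤ B) : weightedNorm ξ φ x y ≤ 2 * n * B := by
  have h₁ := sum_le_sum fun j (_ : j ∈ univ) => hx j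
  have h₂ := sum_le_sum fun j (_ : j ∈ univ) => hy j
  simp only [sum_const, card_univ, Fintype.card_fin, nsmul_eq_mul] at h₁ h₂
  rw [weightedNorm]
  linarith

theorem eq_zero_of_weightedNorm_nonpos {ξ φ x y : Fin n → ℝ} (hξ : ∀ j, 0 < ξ j)
    (hφ : ∀ j, 0 < φ j) (h : weightedNorm ξ φ x y ≤ 0) : x = 0 ∧ y = 0 := by
  constructor <;> funext j
  · have := (mul_abs_le_weightedNorm_left (fun i => (hξ i).le) (fun i => (hφ i).le) x y j).trans h
    exact abs_nonpos_iff.1 (nonpos_of_mul_nonpos_right this (hξ j))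
  · have := (mul_abs_le_weightedNorm_right (fun i => (hξ i).le) (fun i => (hφ i).le) x y j).trans h
    exact abs_nonpos_iff.1 (nonpos_of_mul_nonpos_right this (hφ j))

theorem delay_nonneg {ξ φ mRR mRI mIR mII : Fin n → ℝ} {bR bI : Fin n → Fin n → ℝ}
    (hξ : ∀ j, 0 ≤ ξ j) (hφ : ∀ j, 0 ≤ φ j)
    (hm : ∀ k, 0 ≤ mRR k ∧ 0 ≤ mRI k ∧ 0 ≤ mIR k ∧ 0 ≤ mII k) (j k : Fin n) :
    0 ≤ delayR ξ φ bR bI mRR mIR j k ∧ 0 ≤ delayI ξ φ bR bI mRI mII j k := by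
  obtain ⟨h₁, h₂, h₃, h₄⟩ := hm k
  have := hξ j
  have := hφ j
  constructor <;> · simp only [delayR, delayI]; positivity

theorem abs_mul_add_mul_le {p q u v M N : ℝ} (hp : |p| ≤ M) (hq : |q| ≤ N) :
    |p * u + q * v| ≤ M * |u| + N * |v| :=
  calc |p * u + q * v| ≤ |p| * |u| + |q| * |v| := by
        rw [← abs_mul, ← abs_mul]; exact abs_add_le _ _
    _ ≤ M * |u| + N * |v| := by gcongr

theorem mul_le_abs_of_abs_le_one {s : ℝ} (hs : |s| ≤ 1) (x : ℝ) : s * x ≤ |x| :=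
  (le_abs_self _).trans (by rw [abs_mul]; exact mul_le_of_le_one_left (abs_nonneg x) hs)

theorem mul_sum_le_colSum {c₁ c₂ s₁ s₂ a₁ a₂ : Fin n → ℝ} {w : ℝ} (k : Fin n)
    (hc₁ : ∀ j, 0 ≤ c₁ j) (hc₂ : ∀ j, 0 ≤ c₂ j) (hs₁ : ∀ j, |s₁ j| ≤ 1)
    (hs₂ : ∀ j, |s₂ j| ≤ 1) (hk : s₁ k * w = |w|) :
    w * ∑ j, (c₁ j * s₁ j * a₁ j + c₂ j * s₂ j * a₂ j) ≤ colSum c₁ c₂ a₁ a₂ k * |w| := by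
  have hle : ∀ c s a : ℝ, 0 ≤ c → |s| ≤ 1 → w * (c * s * a) ≤ c * |a| * |w| := fun c s a hc hs => by
    have := mul_le_mul_of_nonneg_left (mul_le_abs_of_abs_le_one hs (a * w)) hc
    rw [abs_mul] at this
    linarith
  have hdiag : w * (c₁ k * s₁ k * a₁ k) = c₁ k * a₁ k * |w| := by rw [← hk]; ring
  rw [colSum, add_mul, add_mul, sum_mul, sum_mul, mul_sum]
  simp only [mul_add, sum_add_distrib]
  rw [← add_sum_erase _ _ (mem_univ k), hdiag]
  have h₁ := sum_le_sum fun j (_ : j ∈ univ.erase k) => hle (c₁ j) (s₁ j) (a₁ j) (hc₁ j) (hs₁ j)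
  have h₂ := sum_le_sum fun j (_ : j ∈ univ) => hle (c₂ j) (s₂ j) (a₂ j) (hc₂ j) (hs₂ j)
  linarith

theorem mul_le_max_mul {P L x M y : ℝ} (hP : P ∈ Set.Icc 0 L) (hx : x ≤ M * y) (hy : 0 ≤ y) :
    P * x ≤ max M 0 * L * y :=
  calc P * x ≤ P * (max M 0 * y) :=
        mul_le_mul_of_nonneg_left (hx.trans (mul_le_mul_of_nonneg_right (le_max_left _ _) hy)) hP.1
    _ ≤ L * (max M 0 * y) := mul_le_mul_of_nonneg_right hP.2 (mul_nonneg (le_max_right _ _) hy)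
    _ = max M 0 * L * y := by ring

theorem colSum_neg_right (c₁ c₂ a₁ a₂ : Fin n → ℝ) (k : Fin n) :
    colSum c₁ c₂ a₁ (-a₂ ·) k = colSum c₁ c₂ a₁ a₂ k := by
  simp [colSum]

variable {ξ φ σ ρ u v PRR PRI PIR PII lRR lRI lIR lII : Fin n → ℝ} {aR aI : Fin n → Fin n → ℝ}

theorem coupling_le (hξ : ∀ j, 0 ≤ ξ j) (hφ : ∀ j, 0 ≤ φ j) (hσ : ∀ j, |σ j| ≤ 1)
    (hρ : ∀ j, |ρ j| ≤ 1) (hσu : ∀ j, σ j * u j = |u j|) (hρv : ∀ j, ρ j * v j = |v j|)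
    (hPRR : ∀ k, PRR k ∈ Set.Icc 0 (lRR k)) (hPRI : ∀ k, PRI k ∈ Set.Icc 0 (lRI k))
    (hPIR : ∀ k, PIR k ∈ Set.Icc 0 (lIR k)) (hPII : ∀ k, PII k ∈ Set.Icc 0 (lII k)) :
    (∑ j, ξ j * σ j * ∑ k, (aR j k * (PRR k * u k + PRI k * v k)
        - aI j k * (PIR k * u k + PII k * v k)))
      + (∑ j, φ j * ρ j * ∑ k, (aR j k * (PIR k * u k + PII k * v k)
        + aI j k * (PRR k * u k + PRI k * v k)))
    ≤ ∑ k, (gainR ξ φ aR aI lRR lIR k * |u k| + gainI ξ φ aR aI lII lRI k * |v k|) := by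
  simp only [mul_sum]
  rw [sum_comm, sum_comm (γ := Fin n) (f := fun j k => φ j * ρ j * _), ← sum_add_distrib]
  refine sum_le_sum fun k _ => ?_
  have e : (∑ j, ξ j * σ j * (aR j k * (PRR k * u k + PRI k * v k)
        - aI j k * (PIR k * u k + PII k * v k)))
      + (∑ j, φ j * ρ j * (aR j k * (PIR k * u k + PII k * v k)
        + aI j k * (PRR k * u k + PRI k * v k)))
      = PRR k * (u k * ∑ j, (ξ j * σ j * aR j k + φ j * ρ j * aI j k))
        + PIR k * (u k * ∑ j, (ξ j * σ j * -aI j k + φ j * ρ j * aR j k))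
        + PII k * (v k * ∑ j, (φ j * ρ j * aR j k + ξ j * σ j * -aI j k))
        + PRI k * (v k * ∑ j, (φ j * ρ j * aI j k + ξ j * σ j * aR j k)) := by
    simp only [mul_sum, ← sum_add_distrib]
    exact sum_congr rfl fun j _ => by ring
  have h₁ := mul_le_max_mul (hPRR k)
    (mul_sum_le_colSum (a₁ := (aR · k)) (a₂ := (aI · k)) k hξ hφ hσ hρ (hσu k)) (abs_nonneg _)
  have h₂ := mul_le_max_mul (hPIR k)
    (mul_sum_le_colSum (a₁ := (-aI · k)) (a₂ := (aR · k)) k hξ hφ hσ hρ (hσu k)) (abs_nonneg _)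
  have h₃ := mul_le_max_mul (hPII k)
    (mul_sum_le_colSum (a₁ := (aR · k)) (a₂ := (-aI · k)) k hφ hξ hρ hσ (hρv k)) (abs_nonneg _)
  have h₄ := mul_le_max_mul (hPRI k)
    (mul_sum_le_colSum (a₁ := (aI · k)) (a₂ := (aR · k)) k hφ hξ hρ hσ (hρv k)) (abs_nonneg _)
  rw [colSum_neg_right] at h₃
  rw [e, gainR, gainI]
  linarith

variable {bR bI GR GI A B : Fin n → Fin n → ℝ} {mRR mRI mIR mII : Fin n → ℝ}

theorem delay_le (hξ : ∀ j, 0 ≤ ξ j) (hφ : ∀ j, 0 ≤ φ j) (hσ : ∀ j, |σ j| ≤ 1)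
    (hρ : ∀ j, |ρ j| ≤ 1) (hGR : ∀ j k, |GR j k| ≤ mRR k * A j k + mRI k * B j k)
    (hGI : ∀ j k, |GI j k| ≤ mIR k * A j k + mII k * B j k) :
    (∑ j, ξ j * σ j * ∑ k, (bR j k * GR j k - bI j k * GI j k))
      + (∑ j, φ j * ρ j * ∑ k, (bR j k * GI j k + bI j k * GR j k))
    ≤ ∑ j, ∑ k, (delayR ξ φ bR bI mRR mIR j k * A j k + delayI ξ φ bR bI mRI mII j k * B j k) := by
  simp only [mul_sum, ← sum_add_distrib]
  refine sum_le_sum fun j _ => sum_le_sum fun k _ => ?_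
  have hGR' := mul_le_mul_of_nonneg_left (hGR j k) (abs_nonneg (bR j k))
  have hGI' := mul_le_mul_of_nonneg_left (hGI j k) (abs_nonneg (bI j k))
  have hGR'' := mul_le_mul_of_nonneg_left (hGR j k) (abs_nonneg (bI j k))
  have hGI'' := mul_le_mul_of_nonneg_left (hGI j k) (abs_nonneg (bR j k))
  have h₁ : σ j * (bR j k * GR j k - bI j k * GI j k)
      ≤ |bR j k| * (mRR k * A j k + mRI k * B j k) + |bI j k| * (mIR k * A j k + mII k * B j k) :=
    calc _ ≤ |bR j k * GR j k - bI j k * GI j k| := mul_le_abs_of_abs_le_one (hσ j) _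
      _ ≤ |bR j k| * |GR j k| + |bI j k| * |GI j k| := by
          rw [← abs_mul, ← abs_mul]; exact abs_sub _ _
      _ ≤ _ := by linarith
  have h₂ : ρ j * (bR j k * GI j k + bI j k * GR j k)
      ≤ |bR j k| * (mIR k * A j k + mII k * B j k) + |bI j k| * (mRR k * A j k + mRI k * B j k) :=
    calc _ ≤ |bR j k * GI j k + bI j k * GR j k| := mul_le_abs_of_abs_le_one (hρ j) _
      _ ≤ |bR j k| * |GI j k| + |bI j k| * |GR j k| := by
          rw [← abs_mul, ← abs_mul]; exact abs_add_le _ _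
      _ ≤ _ := by linarith
  have := mul_le_mul_of_nonneg_left h₁ (hξ j)
  have := mul_le_mul_of_nonneg_left h₂ (hφ j)
  rw [delayR, delayI]
  linarith

theorem weighted_net_le {d : Fin n → ℝ} {FR FI : Fin n → ℝ} (hξ : ∀ j, 0 ≤ ξ j)
    (hφ : ∀ j, 0 ≤ φ j) (hσ : ∀ j, |σ j| ≤ 1) (hρ : ∀ j, |ρ j| ≤ 1)
    (hσu : ∀ j, σ j * u j = |u j|) (hρv : ∀ j, ρ j * v j = |v j|)
    (hPRR : ∀ k, PRR k ∈ Set.Icc 0 (lRR k)) (hPRI : ∀ k, PRI k ∈ Set.Icc 0 (lRI k))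
    (hPIR : ∀ k, PIR k ∈ Set.Icc 0 (lIR k)) (hPII : ∀ k, PII k ∈ Set.Icc 0 (lII k))
    (hFR : ∀ k, FR k = PRR k * u k + PRI k * v k) (hFI : ∀ k, FI k = PIR k * u k + PII k * v k)
    (hGR : ∀ j k, |GR j k| ≤ mRR k * A j k + mRI k * B j k)
    (hGI : ∀ j k, |GI j k| ≤ mIR k * A j k + mII k * B j k) :
    (∑ j, ξ j * σ j * netR d aR aI bR bI u FR FI GR GI j)
      + (∑ j, φ j * ρ j * netI d aR aI bR bI v FR FI GR GI j)
    ≤ ∑ k, ((gainR ξ φ aR aI lRR lIR k - ξ k * d k) * |u k|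
        + (gainI ξ φ aR aI lII lRI k - φ k * d k) * |v k|)
      + ∑ j, ∑ k, (delayR ξ φ bR bI mRR mIR j k * A j k
        + delayI ξ φ bR bI mRI mII j k * B j k) := by
  have hcoupling := coupling_le (aR := aR) (aI := aI) hξ hφ hσ hρ hσu hρv hPRR hPRI hPIR hPII
  simp only [← hFR, ← hFI] at hcoupling
  have hdelay := delay_le (bR := bR) (bI := bI) hξ hφ hσ hρ hGR hGI
  have hdiag : (∑ j, ξ j * σ j * (-(d j) * u j)) + (∑ j, φ j * ρ j * (-(d j) * v j))
      = -∑ k, (ξ k * d k * |u k| + φ k * d k * |v k|) := by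
    rw [← sum_add_distrib, ← sum_neg_distrib]
    exact sum_congr rfl fun j _ => by
      linear_combination (-(ξ j * d j)) * hσu j - φ j * d j * hρv j
  have hlhs : (∑ j, ξ j * σ j * netR d aR aI bR bI u FR FI GR GI j)
      + (∑ j, φ j * ρ j * netI d aR aI bR bI v FR FI GR GI j)
      = ((∑ j, ξ j * σ j * (-(d j) * u j)) + (∑ j, φ j * ρ j * (-(d j) * v j)))
        + ((∑ j, ξ j * σ j * ∑ k, (aR j k * FR k - aI j k * FI k))
          + (∑ j, φ j * ρ j * ∑ k, (aR j k * FI k + aI j k * FR k)))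
        + ((∑ j, ξ j * σ j * ∑ k, (bR j k * GR j k - bI j k * GI j k))
          + (∑ j, φ j * ρ j * ∑ k, (bR j k * GI j k + bI j k * GR j k))) := by
    simp only [netR, netI, mul_add, sum_add_distrib]
    ring
  have hrhs : ∑ k, ((gainR ξ φ aR aI lRR lIR k - ξ k * d k) * |u k|
        + (gainI ξ φ aR aI lII lRI k - φ k * d k) * |v k|)
      = (∑ k, (gainR ξ φ aR aI lRR lIR k * |u k| + gainI ξ φ aR aI lII lRI k * |v k|))
        - ∑ k, (ξ k * d k * |u k| + φ k * d k * |v k|) := by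
    rw [← sum_sub_distrib]
    exact sum_congr rfl fun k _ => by ring
  linarith

theorem column_sum_nonpos {d : Fin n → ℝ} {τ : Fin n → Fin n → ℝ} {ε : ℝ}
    (hcR : ∀ k, ξ k * (-(d k) + ε) + gainR ξ φ aR aI lRR lIR k
      + ∑ j, delayR ξ φ bR bI mRR mIR j k * Real.exp (ε * τ j k) ≤ 0)
    (hcI : ∀ k, φ k * (-(d k) + ε) + gainI ξ φ aR aI lII lRI k
      + ∑ j, delayI ξ φ bR bI mRI mII j k * Real.exp (ε * τ j k) ≤ 0) (x y : Fin n → ℝ) :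
    ε * weightedNorm ξ φ x y
      + ∑ k, ((gainR ξ φ aR aI lRR lIR k - ξ k * d k) * |x k|
        + (gainI ξ φ aR aI lII lRI k - φ k * d k) * |y k|)
      + ∑ j, ∑ k, (delayR ξ φ bR bI mRR mIR j k * |x k| + delayI ξ φ bR bI mRI mII j k * |y k|)
          * Real.exp (ε * τ j k) ≤ 0 := by
  rw [sum_comm, weightedNorm, mul_add, mul_sum, mul_sum, ← sum_add_distrib, ← sum_add_distrib,
    ← sum_add_distrib]
  refine sum_nonpos fun k _ => ?_
  have hsplit : ∑ j, (delayR ξ φ bR bI mRR mIR j k * |x k| + delayI ξ φ bR bI mRI mII j k * |y k|)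
        * Real.exp (ε * τ j k)
      = (∑ j, delayR ξ φ bR bI mRR mIR j k * Real.exp (ε * τ j k)) * |x k|
        + (∑ j, delayI ξ φ bR bI mRI mII j k * Real.exp (ε * τ j k)) * |y k| := by
    rw [sum_mul, sum_mul, ← sum_add_distrib]
    exact sum_congr rfl fun j _ => by ring
  rw [hsplit]
  linarith [mul_nonpos_of_nonpos_of_nonneg (hcR k) (abs_nonneg (x k)),
    mul_nonpos_of_nonpos_of_nonneg (hcI k) (abs_nonneg (y k))]

end Algebra

section Conditions

variable {f₁ f₂ : ℝ → ℝ → ℝ} {l₁ l₂ l₃ l₄ : ℝ}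

theorem CondH1.exists_slopes (h : CondH1 f₁ f₂ l₁ l₂ l₃ l₄) (x y x' y' : ℝ) :
    (∃ p ∈ Set.Icc 0 l₁, ∃ q ∈ Set.Icc 0 l₂, f₁ x y - f₁ x' y' = p * (x - x') + q * (y - y')) ∧
    (∃ p ∈ Set.Icc 0 l₃, ∃ q ∈ Set.Icc 0 l₄, f₂ x y - f₂ x' y' = p * (x - x') + q * (y - y')) := by
  obtain ⟨h₁, h₂, hb⟩ := h
  obtain ⟨c₁, c₁', e₁⟩ := exists_partial_derivs_mul_sub (h₁.differentiable one_ne_zero) x y x' y'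
  obtain ⟨c₂, c₂', e₂⟩ := exists_partial_derivs_mul_sub (h₂.differentiable one_ne_zero) x y x' y'
  exact ⟨⟨_, ⟨(hb c₁ y).1.1.le, (hb c₁ y).1.2⟩, _, ⟨(hb x' c₁').2.1.1.le, (hb x' c₁').2.1.2⟩, e₁⟩,
    ⟨_, ⟨(hb c₂ y).2.2.1.1.le, (hb c₂ y).2.2.1.2⟩, _,
      ⟨(hb x' c₂').2.2.2.1.le, (hb x' c₂').2.2.2.2⟩, e₂⟩⟩

theorem CondH2.nonneg (h : CondH2 f₁ f₂ l₁ l₂ l₃ l₄) : 0 ≤ l₁ ∧ 0 ≤ l₂ ∧ 0 ≤ l₃ ∧ 0 ≤ l₄ :=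
  let ⟨h₁, h₂, h₃, h₄⟩ := h.2.2 0 0
  ⟨(abs_nonneg _).trans h₁, (abs_nonneg _).trans h₂, (abs_nonneg _).trans h₃,
    (abs_nonneg _).trans h₄⟩

theorem CondH2.abs_sub_le (h : CondH2 f₁ f₂ l₁ l₂ l₃ l₄) (x y x' y' : ℝ) :
    |f₁ x y - f₁ x' y'| ≤ l₁ * |x - x'| + l₂ * |y - y'| ∧
    |f₂ x y - f₂ x' y'| ≤ l₃ * |x - x'| + l₄ * |y - y'| := by
  obtain ⟨h₁, h₂, hb⟩ := h
  obtain ⟨c₁, c₁', e₁⟩ := exists_partial_derivs_mul_sub (h₁.differentiable one_ne_zero) x y x' y'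
  obtain ⟨c₂, c₂', e₂⟩ := exists_partial_derivs_mul_sub (h₂.differentiable one_ne_zero) x y x' y'
  rw [e₁, e₂]
  exact ⟨abs_mul_add_mul_le (hb c₁ y).1 (hb x' c₁').2.1,
    abs_mul_add_mul_le (hb c₂ y).2.2.1 (hb x' c₂').2.2.2⟩

theorem CondH2.abs_dirDeriv_le (h : CondH2 f₁ f₂ l₁ l₂ l₃ l₄) (x y x' y' : ℝ) :
    |dirDeriv f₁ x y x' y'| ≤ l₁ * |x'| + l₂ * |y'| ∧
    |dirDeriv f₂ x y x' y'| ≤ l₃ * |x'| + l₄ * |y'| :=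
  ⟨abs_mul_add_mul_le (h.2.2 x y).1 (h.2.2 x y).2.1,
    abs_mul_add_mul_le (h.2.2 x y).2.2.1 (h.2.2 x y).2.2.2⟩

end Conditions

section Lyapunov

variable {n : ℕ} {ξ φ : Fin n → ℝ}

theorem exists_rightDiniLE_exp_mul_weightedNorm {X Y : Fin n → ℝ → ℝ} {X' Y' : Fin n → ℝ}
    {t : ℝ} (ε : ℝ) (hξ : ∀ j, 0 ≤ ξ j) (hφ : ∀ j, 0 ≤ φ j)
    (hX : ∀ j, HasDerivAt (X j) (X' j) t) (hY : ∀ j, HasDerivAt (Y j) (Y' j) t) :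
    ∃ σ ρ : Fin n → ℝ, (∀ j, |σ j| ≤ 1) ∧ (∀ j, |ρ j| ≤ 1) ∧ (∀ j, σ j * X j t = |X j t|) ∧
      (∀ j, ρ j * Y j t = |Y j t|) ∧
      RightDiniLE (fun z => Real.exp (ε * z) * weightedNorm ξ φ (X · z) (Y · z)) t
        (Real.exp (ε * t) * (ε * weightedNorm ξ φ (X · t) (Y · t)
          + (∑ j, ξ j * σ j * X' j) + (∑ j, φ j * ρ j * Y' j))) := by
  have he : HasDerivAt (fun z => Real.exp (ε * z)) (Real.exp (ε * t) * ε) t := by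
    simpa using ((hasDerivAt_id t).const_mul ε).exp
  have key : ∀ (U : ℝ → ℝ) (U' : ℝ), HasDerivAt U U' t → ∃ σ, |σ| ≤ 1 ∧ σ * U t = |U t| ∧
      RightDiniLE (fun z => |Real.exp (ε * z) * U z|) t
        (Real.exp (ε * t) * (ε * |U t| + σ * U')) := fun U U' hU => by
    obtain ⟨σ, hσ, hσU, hD⟩ := exists_rightDiniLE_abs (he.fun_mul hU)
    have hpos := Real.exp_pos (ε * t)
    rw [abs_mul, abs_of_pos hpos] at hσU
    have hσU' : σ * U t = |U t| := mul_left_cancel₀ hpos.ne' (by linear_combination hσU)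
    exact ⟨σ, hσ, hσU', hD.mono (le_of_eq (by rw [← hσU']; ring))⟩
  choose σ hσ hσX hDX using fun j => key (X j) (X' j) (hX j)
  choose ρ hρ hρY hDY using fun j => key (Y j) (Y' j) (hY j)
  refine ⟨σ, ρ, hσ, hρ, hσX, hρY, ?_⟩
  have hsplit : (fun z => Real.exp (ε * z) * weightedNorm ξ φ (X · z) (Y · z))
      = fun z => (∑ j, ξ j * |Real.exp (ε * z) * X j z|)
        + ∑ j, φ j * |Real.exp (ε * z) * Y j z| := by
    funext z
    simp only [weightedNorm, abs_mul, abs_of_pos (Real.exp_pos _), mul_add, mul_sum]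
    ring_nf
  rw [hsplit]
  refine ((RightDiniLE.sum univ fun j _ => (hDX j).const_mul (hξ j)).add
    (RightDiniLE.sum univ fun j _ => (hDY j).const_mul (hφ j))).mono (le_of_eq ?_)
  simp only [weightedNorm, mul_add, mul_sum, ← sum_add_distrib]
  exact sum_congr rfl fun j _ => by ring

theorem hasDerivAt_sum_exp_integral {c : Fin n → Fin n → ℝ → ℝ} (hc : ∀ j k, Continuous (c j k))
    (τ : Fin n → Fin n → ℝ) (ε t : ℝ) :
    HasDerivAt
      (fun z => ∑ j, ∑ k, Real.exp (ε * τ j k) * ∫ s in z - τ j k..z, c j k s * Real.exp (ε * s))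
      (Real.exp (ε * t) * ∑ j, ∑ k, (c j k t * Real.exp (ε * τ j k) - c j k (t - τ j k))) t := by
  refine (HasDerivAt.fun_sum fun j _ => HasDerivAt.fun_sum fun k _ =>
    (hasDerivAt_integral_sub (by fun_prop) (τ j k) t).const_mul _).congr_deriv ?_
  simp only [mul_sum]
  refine sum_congr rfl fun j _ => sum_congr rfl fun k _ => ?_
  have : Real.exp (ε * τ j k) * Real.exp (ε * (t - τ j k)) = Real.exp (ε * t) := by
    rw [← Real.exp_add]; ring_nf
  linear_combination (-c j k (t - τ j k)) * this

variable {d : Fin n → ℝ} {aR aI bR bI τ : Fin n → Fin n → ℝ}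
  {lRR lRI lIR lII mRR mRI mIR mII : Fin n → ℝ} {ε : ℝ}

/-- The proof shows that
`V t = e^{εt} ‖(X t, Y t)‖_{ξ,1} + Σ_{j,k} e^{ετ_jk} ∫_{t-τ_jk}^t c_jk(s) e^{εs} ds`,
with `c_jk` the weights of the delayed terms, does not increase: the integrals pay for them. -/
theorem exists_weightedNorm_le_of_linearized {X Y PRR PRI PIR PII : Fin n → ℝ → ℝ}
    {GR GI : ℝ → Fin n → Fin n → ℝ} (hτ : ∀ j k, 0 ≤ τ j k) (hξ : ∀ j, 0 ≤ ξ j)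
    (hφ : ∀ j, 0 ≤ φ j) (hm : ∀ k, 0 ≤ mRR k ∧ 0 ≤ mRI k ∧ 0 ≤ mIR k ∧ 0 ≤ mII k)
    (hcR : ∀ k, ξ k * (-(d k) + ε) + gainR ξ φ aR aI lRR lIR k
      + ∑ j, delayR ξ φ bR bI mRR mIR j k * Real.exp (ε * τ j k) ≤ 0)
    (hcI : ∀ k, φ k * (-(d k) + ε) + gainI ξ φ aR aI lII lRI k
      + ∑ j, delayI ξ φ bR bI mRI mII j k * Real.exp (ε * τ j k) ≤ 0)
    (hXc : ∀ j, Continuous (X j)) (hYc : ∀ j, Continuous (Y j))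
    (hPRR : ∀ k t, PRR k t ∈ Set.Icc 0 (lRR k)) (hPRI : ∀ k t, PRI k t ∈ Set.Icc 0 (lRI k))
    (hPIR : ∀ k t, PIR k t ∈ Set.Icc 0 (lIR k)) (hPII : ∀ k t, PII k t ∈ Set.Icc 0 (lII k))
    (hGR : ∀ t j k, |GR t j k| ≤ mRR k * |X k (t - τ j k)| + mRI k * |Y k (t - τ j k)|)
    (hGI : ∀ t j k, |GI t j k| ≤ mIR k * |X k (t - τ j k)| + mII k * |Y k (t - τ j k)|)
    (hX : ∀ j t, 0 < t → HasDerivAt (X j) (netR d aR aI bR bI (X · t)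
      (fun k => PRR k t * X k t + PRI k t * Y k t) (fun k => PIR k t * X k t + PII k t * Y k t)
      (GR t) (GI t) j) t)
    (hY : ∀ j t, 0 < t → HasDerivAt (Y j) (netI d aR aI bR bI (Y · t)
      (fun k => PRR k t * X k t + PRI k t * Y k t) (fun k => PIR k t * X k t + PII k t * Y k t)
      (GR t) (GI t) j) t) :
    ∃ C, ∀ t, 0 ≤ t → weightedNorm ξ φ (X · t) (Y · t) ≤ C * Real.exp (-ε * t) := by
  set c : Fin n → Fin n → ℝ → ℝ := fun j k s =>
    delayR ξ φ bR bI mRR mIR j k * |X k s| + delayI ξ φ bR bI mRI mII j k * |Y k s|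
  have hc : ∀ j k, Continuous (c j k) := fun j k =>
    (continuous_const.mul (hXc k).abs).add (continuous_const.mul (hYc k).abs)
  have hc0 : ∀ j k s, 0 ≤ c j k s := fun j k s => by
    obtain ⟨h₁, h₂⟩ := delay_nonneg (bR := bR) (bI := bI) hξ hφ hm j k
    exact add_nonneg (mul_nonneg h₁ (abs_nonneg _)) (mul_nonneg h₂ (abs_nonneg _))
  set W : ℝ → ℝ := fun z =>
    ∑ j, ∑ k, Real.exp (ε * τ j k) * ∫ s in z - τ j k..z, c j k s * Real.exp (ε * s)
  have hW := hasDerivAt_sum_exp_integral hc τ ε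
  have hW0 : ∀ t, 0 ≤ W t := fun t => sum_nonneg fun j _ => sum_nonneg fun k _ =>
    mul_nonneg (Real.exp_pos _).le (intervalIntegral.integral_nonneg (by linarith [hτ j k])
      fun s _ => mul_nonneg (hc0 j k s) (Real.exp_pos _).le)
  set V : ℝ → ℝ := fun z => Real.exp (ε * z) * weightedNorm ξ φ (X · z) (Y · z) + W z
  have hV : Continuous V := by
    have : Continuous W := continuous_iff_continuousAt.2 fun t => (hW t).continuousAt
    have : Continuous fun z => weightedNorm ξ φ (X · z) (Y · z) := by
      simp only [weightedNorm]
      fun_prop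
    fun_prop
  have hdini : ∀ t, 0 < t → RightDiniLE V t 0 := fun t ht => by
    obtain ⟨σ, ρ, hσ, hρ, hσX, hρY, hD⟩ :=
      exists_rightDiniLE_exp_mul_weightedNorm ε hξ hφ (fun j => hX j t ht) (fun j => hY j t ht)
    refine (hD.add (hW t).rightDiniLE).mono ?_
    have hnet := weighted_net_le (d := d) (aR := aR) (aI := aI) (bR := bR) (bI := bI)
      (A := fun j k => |X k (t - τ j k)|)
      (B := fun j k => |Y k (t - τ j k)|) hξ hφ hσ hρ hσX hρY (fun k => hPRR k t)
      (fun k => hPRI k t) (fun k => hPIR k t) (fun k => hPII k t) (fun _ => rfl) (fun _ => rfl)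
      (hGR t) (hGI t)
    have hcol := column_sum_nonpos hcR hcI (X · t) (Y · t)
    have hW' : ∑ j, ∑ k, (c j k t * Real.exp (ε * τ j k) - c j k (t - τ j k))
        = (∑ j, ∑ k, c j k t * Real.exp (ε * τ j k)) - ∑ j, ∑ k, c j k (t - τ j k) := by
      simp only [← sum_sub_distrib]
    rw [← mul_add, hW']
    exact mul_nonpos_of_nonneg_of_nonpos (Real.exp_pos _).le (by linarith)
  refine ⟨V 0, fun t ht => ?_⟩
  have hVt := le_of_rightDiniLE_zero hV hdini ht
  rw [show -ε * t = -(ε * t) by ring, Real.exp_neg, ← div_eq_mul_inv,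
    le_div_iff₀ (Real.exp_pos _)]
  linarith [hW0 t]

end Lyapunov

section Network

variable {n : ℕ} {d : Fin n → ℝ} {aR aI bR bI : Fin n → Fin n → ℝ}

theorem netR_sub (x F₁ F₂ x' F₁' F₂' : Fin n → ℝ) (G₁ G₂ G₁' G₂' : Fin n → Fin n → ℝ) (j : Fin n) :
    netR d aR aI bR bI x F₁ F₂ G₁ G₂ j - netR d aR aI bR bI x' F₁' F₂' G₁' G₂' j
      = netR d aR aI bR bI (fun k => x k - x' k) (fun k => F₁ k - F₁' k) (fun k => F₂ k - F₂' k)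
          (fun j k => G₁ j k - G₁' j k) (fun j k => G₂ j k - G₂' j k) j := by
  simp only [netR, mul_sub, sum_sub_distrib]
  ring

theorem netI_sub (y F₁ F₂ y' F₁' F₂' : Fin n → ℝ) (G₁ G₂ G₁' G₂' : Fin n → Fin n → ℝ) (j : Fin n) :
    netI d aR aI bR bI y F₁ F₂ G₁ G₂ j - netI d aR aI bR bI y' F₁' F₂' G₁' G₂' j
      = netI d aR aI bR bI (fun k => y k - y' k) (fun k => F₁ k - F₁' k) (fun k => F₂ k - F₂' k)
          (fun j k => G₁ j k - G₁' j k) (fun j k => G₂ j k - G₂' j k) j := by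
  simp only [netI, mul_sub, sum_add_distrib, sum_sub_distrib]
  ring

section Curves

variable {x F₁ F₂ : ℝ → Fin n → ℝ} {G₁ G₂ : ℝ → Fin n → Fin n → ℝ} {j : Fin n}

theorem HasDerivAt.netR {x' F₁' F₂' : Fin n → ℝ} {G₁' G₂' : Fin n → Fin n → ℝ} {t : ℝ}
    (hx : HasDerivAt (x · j) (x' j) t) (hF₁ : ∀ k, HasDerivAt (F₁ · k) (F₁' k) t)
    (hF₂ : ∀ k, HasDerivAt (F₂ · k) (F₂' k) t) (hG₁ : ∀ k, HasDerivAt (G₁ · j k) (G₁' j k) t)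
    (hG₂ : ∀ k, HasDerivAt (G₂ · j k) (G₂' j k) t) :
    HasDerivAt (fun s => netR d aR aI bR bI (x s) (F₁ s) (F₂ s) (G₁ s) (G₂ s) j)
      (netR d aR aI bR bI x' F₁' F₂' G₁' G₂' j) t :=
  ((hx.const_mul _).add (HasDerivAt.fun_sum fun k _ =>
    ((hF₁ k).const_mul _).sub ((hF₂ k).const_mul _))).add
    (HasDerivAt.fun_sum fun k _ => ((hG₁ k).const_mul _).sub ((hG₂ k).const_mul _))

theorem HasDerivAt.netI {x' F₁' F₂' : Fin n → ℝ} {G₁' G₂' : Fin n → Fin n → ℝ} {t : ℝ}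
    (hx : HasDerivAt (x · j) (x' j) t) (hF₁ : ∀ k, HasDerivAt (F₁ · k) (F₁' k) t)
    (hF₂ : ∀ k, HasDerivAt (F₂ · k) (F₂' k) t) (hG₁ : ∀ k, HasDerivAt (G₁ · j k) (G₁' j k) t)
    (hG₂ : ∀ k, HasDerivAt (G₂ · j k) (G₂' j k) t) :
    HasDerivAt (fun s => netI d aR aI bR bI (x s) (F₁ s) (F₂ s) (G₁ s) (G₂ s) j)
      (netI d aR aI bR bI x' F₁' F₂' G₁' G₂' j) t :=
  ((hx.const_mul _).add (HasDerivAt.fun_sum fun k _ =>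
    ((hF₂ k).const_mul _).add ((hF₁ k).const_mul _))).add
    (HasDerivAt.fun_sum fun k _ => ((hG₂ k).const_mul _).add ((hG₁ k).const_mul _))

theorem Filter.Tendsto.netR {l : Filter ℝ} {x₀ F₁₀ F₂₀ : Fin n → ℝ} {G₁₀ G₂₀ : Fin n → Fin n → ℝ}
    (hx : Tendsto (x · j) l (𝓝 (x₀ j))) (hF₁ : ∀ k, Tendsto (F₁ · k) l (𝓝 (F₁₀ k)))
    (hF₂ : ∀ k, Tendsto (F₂ · k) l (𝓝 (F₂₀ k))) (hG₁ : ∀ k, Tendsto (G₁ · j k) l (𝓝 (G₁₀ j k)))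
    (hG₂ : ∀ k, Tendsto (G₂ · j k) l (𝓝 (G₂₀ j k))) :
    Tendsto (fun s => netR d aR aI bR bI (x s) (F₁ s) (F₂ s) (G₁ s) (G₂ s) j) l
      (𝓝 (netR d aR aI bR bI x₀ F₁₀ F₂₀ G₁₀ G₂₀ j)) :=
  ((hx.const_mul _).add (tendsto_finsetSum _ fun k _ =>
    ((hF₁ k).const_mul _).sub ((hF₂ k).const_mul _))).add
    (tendsto_finsetSum _ fun k _ => ((hG₁ k).const_mul _).sub ((hG₂ k).const_mul _))

theorem Filter.Tendsto.netI {l : Filter ℝ} {x₀ F₁₀ F₂₀ : Fin n → ℝ} {G₁₀ G₂₀ : Fin n → Fin n → ℝ}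
    (hx : Tendsto (x · j) l (𝓝 (x₀ j))) (hF₁ : ∀ k, Tendsto (F₁ · k) l (𝓝 (F₁₀ k)))
    (hF₂ : ∀ k, Tendsto (F₂ · k) l (𝓝 (F₂₀ k))) (hG₁ : ∀ k, Tendsto (G₁ · j k) l (𝓝 (G₁₀ j k)))
    (hG₂ : ∀ k, Tendsto (G₂ · j k) l (𝓝 (G₂₀ j k))) :
    Tendsto (fun s => netI d aR aI bR bI (x s) (F₁ s) (F₂ s) (G₁ s) (G₂ s) j) l
      (𝓝 (netI d aR aI bR bI x₀ F₁₀ F₂₀ G₁₀ G₂₀ j)) :=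
  ((hx.const_mul _).add (tendsto_finsetSum _ fun k _ =>
    ((hF₂ k).const_mul _).add ((hF₁ k).const_mul _))).add
    (tendsto_finsetSum _ fun k _ => ((hG₂ k).const_mul _).add ((hG₁ k).const_mul _))

end Curves

variable {τ : Fin n → Fin n → ℝ} {uR uI : Fin n → ℝ} {fR fI gR gI : Fin n → ℝ → ℝ → ℝ}
  {lRR lRI lIR lII mRR mRI mIR mII ξ φ : Fin n → ℝ} {ε : ℝ}

theorem isEquilibrium_iff {wR wI : Fin n → ℝ} :
    IsEquilibrium n d aR aI bR bI uR uI fR fI gR gI wR wI ↔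
      (∀ j, netR d aR aI bR bI wR (fun k => fR k (wR k) (wI k)) (fun k => fI k (wR k) (wI k))
        (fun _ k => gR k (wR k) (wI k)) (fun _ k => gI k (wR k) (wI k)) j + uR j = 0) ∧
      (∀ j, netI d aR aI bR bI wI (fun k => fR k (wR k) (wI k)) (fun k => fI k (wR k) (wI k))
        (fun _ k => gR k (wR k) (wI k)) (fun _ k => gI k (wR k) (wI k)) j + uI j = 0) :=
  Iff.rfl

theorem IsEquilibrium.eq (hτ : ∀ j k, 0 ≤ τ j k)
    (hf : ∀ j, CondH1 (fR j) (fI j) (lRR j) (lRI j) (lIR j) (lII j))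
    (hg : ∀ j, CondH2 (gR j) (gI j) (mRR j) (mRI j) (mIR j) (mII j))
    (hξ : ∀ j, 0 < ξ j) (hφ : ∀ j, 0 < φ j) (hε : 0 < ε)
    (hcR : ∀ k, ξ k * (-(d k) + ε) + gainR ξ φ aR aI lRR lIR k
      + ∑ j, delayR ξ φ bR bI mRR mIR j k * Real.exp (ε * τ j k) ≤ 0)
    (hcI : ∀ k, φ k * (-(d k) + ε) + gainI ξ φ aR aI lII lRI k
      + ∑ j, delayI ξ φ bR bI mRI mII j k * Real.exp (ε * τ j k) ≤ 0)
    {wR wI zR zI : Fin n → ℝ} (hw : IsEquilibrium n d aR aI bR bI uR uI fR fI gR gI wR wI)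
    (hz : IsEquilibrium n d aR aI bR bI uR uI fR fI gR gI zR zI) : wR = zR ∧ wI = zI := by
  set u : Fin n → ℝ := fun k => wR k - zR k
  set v : Fin n → ℝ := fun k => wI k - zI k
  choose PRR hPRR PRI hPRI hFR using fun k =>
    ((hf k).exists_slopes (wR k) (wI k) (zR k) (zI k)).1
  choose PIR hPIR PII hPII hFI using fun k =>
    ((hf k).exists_slopes (wR k) (wI k) (zR k) (zI k)).2
  have hnet := weighted_net_le (d := d) (aR := aR) (aI := aI) (bR := bR) (bI := bI)
    (A := fun _ k => |u k|) (B := fun _ k => |v k|) (fun j => (hξ j).le) (fun j => (hφ j).le)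
    (fun j => abs_sign_le_one (u j)) (fun j => abs_sign_le_one (v j))
    (fun j => sign_mul_self (u j)) (fun j => sign_mul_self (v j)) hPRR hPRI hPIR hPII hFR hFI
    (fun _ k => ((hg k).abs_sub_le (wR k) (wI k) (zR k) (zI k)).1)
    (fun _ k => ((hg k).abs_sub_le (wR k) (wI k) (zR k) (zI k)).2)
  have hR : ∀ j, netR d aR aI bR bI u (fun k => fR k (wR k) (wI k) - fR k (zR k) (zI k))
      (fun k => fI k (wR k) (wI k) - fI k (zR k) (zI k))
      (fun _ k => gR k (wR k) (wI k) - gR k (zR k) (zI k))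
      (fun _ k => gI k (wR k) (wI k) - gI k (zR k) (zI k)) j = 0 := fun j => by
    rw [← netR_sub]
    linarith [(isEquilibrium_iff.1 hw).1 j, (isEquilibrium_iff.1 hz).1 j]
  have hI : ∀ j, netI d aR aI bR bI v (fun k => fR k (wR k) (wI k) - fR k (zR k) (zI k))
      (fun k => fI k (wR k) (wI k) - fI k (zR k) (zI k))
      (fun _ k => gR k (wR k) (wI k) - gR k (zR k) (zI k))
      (fun _ k => gI k (wR k) (wI k) - gI k (zR k) (zI k)) j = 0 := fun j => by
    rw [← netI_sub]
    linarith [(isEquilibrium_iff.1 hw).2 j, (isEquilibrium_iff.1 hz).2 j]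
  simp only [hR, hI, mul_zero, sum_const_zero, add_zero] at hnet
  have hdelay : ∑ j, ∑ k, (delayR ξ φ bR bI mRR mIR j k * |u k|
        + delayI ξ φ bR bI mRI mII j k * |v k|)
      ≤ ∑ j, ∑ k, (delayR ξ φ bR bI mRR mIR j k * |u k| + delayI ξ φ bR bI mRI mII j k * |v k|)
          * Real.exp (ε * τ j k) := by
    refine sum_le_sum fun j _ => sum_le_sum fun k _ => le_mul_of_one_le_right ?_
      (Real.one_le_exp (mul_nonneg hε.le (hτ j k)))
    obtain ⟨h₁, h₂⟩ := delay_nonneg (bR := bR) (bI := bI) (fun j => (hξ j).le)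
      (fun j => (hφ j).le) (fun k => (hg k).nonneg) j k
    positivity
  have hN : ε * weightedNorm ξ φ u v ≤ 0 := by linarith [column_sum_nonpos hcR hcI u v]
  obtain ⟨hu, hv⟩ := eq_zero_of_weightedNorm_nonpos hξ hφ
    (nonpos_of_mul_nonpos_right hN hε)
  exact ⟨funext fun k => sub_eq_zero.1 (congrFun hu k),
    funext fun k => sub_eq_zero.1 (congrFun hv k)⟩

section Solutions

variable {zR zI : Fin n → ℝ → ℝ}

theorem IsSolution.hasDerivAt_deriv (hsol : IsSolution n d aR aI bR bI τ uR uI fR fI gR gI zR zI)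
    (hfR : ∀ k, Differentiable ℝ fun p : ℝ × ℝ => fR k p.1 p.2)
    (hfI : ∀ k, Differentiable ℝ fun p : ℝ × ℝ => fI k p.1 p.2)
    (hgR : ∀ k, Differentiable ℝ fun p : ℝ × ℝ => gR k p.1 p.2)
    (hgI : ∀ k, Differentiable ℝ fun p : ℝ × ℝ => gI k p.1 p.2) {t : ℝ} (ht : 0 < t) (j : Fin n) :
    HasDerivAt (deriv (zR j)) (netR d aR aI bR bI (fun k => deriv (zR k) t)
      (fun k => dirDeriv (fR k) (zR k t) (zI k t) (deriv (zR k) t) (deriv (zI k) t))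
      (fun k => dirDeriv (fI k) (zR k t) (zI k t) (deriv (zR k) t) (deriv (zI k) t))
      (fun j k => dirDeriv (gR k) (zR k (t - τ j k)) (zI k (t - τ j k))
        (deriv (zR k) (t - τ j k)) (deriv (zI k) (t - τ j k)))
      (fun j k => dirDeriv (gI k) (zR k (t - τ j k)) (zI k (t - τ j k))
        (deriv (zR k) (t - τ j k)) (deriv (zI k) (t - τ j k))) j) t ∧
    HasDerivAt (deriv (zI j)) (netI d aR aI bR bI (fun k => deriv (zI k) t)
      (fun k => dirDeriv (fR k) (zR k t) (zI k t) (deriv (zR k) t) (deriv (zI k) t))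
      (fun k => dirDeriv (fI k) (zR k t) (zI k t) (deriv (zR k) t) (deriv (zI k) t))
      (fun j k => dirDeriv (gR k) (zR k (t - τ j k)) (zI k (t - τ j k))
        (deriv (zR k) (t - τ j k)) (deriv (zI k) (t - τ j k)))
      (fun j k => dirDeriv (gI k) (zR k (t - τ j k)) (zI k (t - τ j k))
        (deriv (zR k) (t - τ j k)) (deriv (zI k) (t - τ j k))) j) t := by
  obtain ⟨hzR, hzI, hodeR, hodeI⟩ := hsol
  have hR : ∀ k s, HasDerivAt (zR k) (deriv (zR k) s) s := fun k s =>
    ((hzR k).differentiable one_ne_zero s).hasDerivAt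
  have hI : ∀ k s, HasDerivAt (zI k) (deriv (zI k) s) s := fun k s =>
    ((hzI k).differentiable one_ne_zero s).hasDerivAt
  have hF : ∀ {F : ℝ → ℝ → ℝ}, Differentiable ℝ (fun p : ℝ × ℝ => F p.1 p.2) → ∀ k c,
      HasDerivAt (fun s => F (zR k (s - c)) (zI k (s - c)))
        (dirDeriv F (zR k (t - c)) (zI k (t - c)) (deriv (zR k) (t - c)) (deriv (zI k) (t - c)))
        t := fun hF k c =>
    HasDerivAt.comp₂ (x := fun s => zR k (s - c)) (y := fun s => zI k (s - c)) hF.differentiableAt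
      ((hR k (t - c)).comp_sub_const t c) ((hI k (t - c)).comp_sub_const t c)
  have hnear : ∀ᶠ s in 𝓝 t, 0 ≤ s := eventually_ge_nhds ht
  constructor
  · refine ((HasDerivAt.netR (x := fun s k => zR k s)
      (G₁ := fun s j k => gR k (zR k (s - τ j k)) (zI k (s - τ j k)))
      (G₂ := fun s j k => gI k (zR k (s - τ j k)) (zI k (s - τ j k))) (hR j t)
      (fun k => by simpa using hF (hfR k) k 0) (fun k => by simpa using hF (hfI k) k 0)
      (fun k => hF (hgR k) k (τ j k)) (fun k => hF (hgI k) k (τ j k))).add_const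
        (uR j)).congr_of_eventuallyEq ?_
    filter_upwards [hnear] with s hs using hodeR j s hs
  · refine ((HasDerivAt.netI (x := fun s k => zI k s)
      (G₁ := fun s j k => gR k (zR k (s - τ j k)) (zI k (s - τ j k)))
      (G₂ := fun s j k => gI k (zR k (s - τ j k)) (zI k (s - τ j k))) (hI j t)
      (fun k => by simpa using hF (hfR k) k 0) (fun k => by simpa using hF (hfI k) k 0)
      (fun k => hF (hgR k) k (τ j k)) (fun k => hF (hgI k) k (τ j k))).add_const
        (uI j)).congr_of_eventuallyEq ?_
    filter_upwards [hnear] with s hs using hodeI j s hs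

theorem IsSolution.isEquilibrium_of_tendsto {wR wI : Fin n → ℝ}
    (hsol : IsSolution n d aR aI bR bI τ uR uI fR fI gR gI zR zI)
    (hfR : ∀ k, Continuous fun p : ℝ × ℝ => fR k p.1 p.2)
    (hfI : ∀ k, Continuous fun p : ℝ × ℝ => fI k p.1 p.2)
    (hgR : ∀ k, Continuous fun p : ℝ × ℝ => gR k p.1 p.2)
    (hgI : ∀ k, Continuous fun p : ℝ × ℝ => gI k p.1 p.2)
    (hR : ∀ j, Tendsto (zR j) atTop (𝓝 (wR j))) (hI : ∀ j, Tendsto (zI j) atTop (𝓝 (wI j)))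
    (hR' : ∀ j, Tendsto (deriv (zR j)) atTop (𝓝 0))
    (hI' : ∀ j, Tendsto (deriv (zI j)) atTop (𝓝 0)) :
    IsEquilibrium n d aR aI bR bI uR uI fR fI gR gI wR wI := by
  obtain ⟨-, -, hodeR, hodeI⟩ := hsol
  rw [isEquilibrium_iff]
  have hF : ∀ {F : ℝ → ℝ → ℝ}, Continuous (fun p : ℝ × ℝ => F p.1 p.2) → ∀ k c,
      Tendsto (fun s => F (zR k (s - c)) (zI k (s - c))) atTop (𝓝 (F (wR k) (wI k))) :=
    fun hF k c => (hF.tendsto (wR k, wI k)).comp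
      (((hR k).prodMk_nhds (hI k)).comp (tendsto_atTop_add_const_right _ (-c) tendsto_id))
  constructor
  · intro j
    refine tendsto_nhds_unique (((Tendsto.netR (x := fun s k => zR k s)
      (G₁ := fun s j k => gR k (zR k (s - τ j k)) (zI k (s - τ j k)))
      (G₂ := fun s j k => gI k (zR k (s - τ j k)) (zI k (s - τ j k))) (hR j)
      (fun k => by simpa using hF (hfR k) k 0) (fun k => by simpa using hF (hfI k) k 0)
      (fun k => hF (hgR k) k (τ j k)) (fun k => hF (hgI k) k (τ j k))).add_const (uR j)).congr' ?_)
      (hR' j)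
    filter_upwards [eventually_ge_atTop 0] with s hs using (hodeR j s hs).symm
  · intro j
    refine tendsto_nhds_unique (((Tendsto.netI (x := fun s k => zI k s)
      (G₁ := fun s j k => gR k (zR k (s - τ j k)) (zI k (s - τ j k)))
      (G₂ := fun s j k => gI k (zR k (s - τ j k)) (zI k (s - τ j k))) (hI j)
      (fun k => by simpa using hF (hfR k) k 0) (fun k => by simpa using hF (hfI k) k 0)
      (fun k => hF (hgR k) k (τ j k)) (fun k => hF (hgI k) k (τ j k))).add_const (uI j)).congr' ?_)
      (hI' j)
    filter_upwards [eventually_ge_atTop 0] with s hs using (hodeI j s hs).symm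

theorem IsSolution.exists_weightedNorm_deriv_le (hτ : ∀ j k, 0 ≤ τ j k)
    (hf : ∀ j, CondH1 (fR j) (fI j) (lRR j) (lRI j) (lIR j) (lII j))
    (hg : ∀ j, CondH2 (gR j) (gI j) (mRR j) (mRI j) (mIR j) (mII j))
    (hξ : ∀ j, 0 ≤ ξ j) (hφ : ∀ j, 0 ≤ φ j)
    (hcR : ∀ k, ξ k * (-(d k) + ε) + gainR ξ φ aR aI lRR lIR k
      + ∑ j, delayR ξ φ bR bI mRR mIR j k * Real.exp (ε * τ j k) ≤ 0)
    (hcI : ∀ k, φ k * (-(d k) + ε) + gainI ξ φ aR aI lII lRI k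
      + ∑ j, delayI ξ φ bR bI mRI mII j k * Real.exp (ε * τ j k) ≤ 0)
    (hsol : IsSolution n d aR aI bR bI τ uR uI fR fI gR gI zR zI) :
    ∃ C, ∀ t, 0 ≤ t → weightedNorm ξ φ (fun j => deriv (zR j) t) (fun j => deriv (zI j) t)
      ≤ C * Real.exp (-ε * t) := by
  have hfR := fun k => (hf k).1.differentiable one_ne_zero
  have hfI := fun k => (hf k).2.1.differentiable one_ne_zero
  have hgR := fun k => (hg k).1.differentiable one_ne_zero
  have hgI := fun k => (hg k).2.1.differentiable one_ne_zero
  exact exists_weightedNorm_le_of_linearized (ξ := ξ) (φ := φ)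
    (X := fun k => deriv (zR k)) (Y := fun k => deriv (zI k))
    (PRR := fun k t => deriv (fun s => fR k s (zI k t)) (zR k t))
    (PRI := fun k t => deriv (fun s => fR k (zR k t) s) (zI k t))
    (PIR := fun k t => deriv (fun s => fI k s (zI k t)) (zR k t))
    (PII := fun k t => deriv (fun s => fI k (zR k t) s) (zI k t))
    hτ hξ hφ (fun k => (hg k).nonneg) hcR hcI
    (fun j => (hsol.1 j).continuous_deriv le_rfl) (fun j => (hsol.2.1 j).continuous_deriv le_rfl)
    (fun k t => ⟨((hf k).2.2 _ _).1.1.le, ((hf k).2.2 _ _).1.2⟩)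
    (fun k t => ⟨((hf k).2.2 _ _).2.1.1.le, ((hf k).2.2 _ _).2.1.2⟩)
    (fun k t => ⟨((hf k).2.2 _ _).2.2.1.1.le, ((hf k).2.2 _ _).2.2.1.2⟩)
    (fun k t => ⟨((hf k).2.2 _ _).2.2.2.1.le, ((hf k).2.2 _ _).2.2.2.2⟩)
    (fun t j k => ((hg k).abs_dirDeriv_le _ _ _ _).1)
    (fun t j k => ((hg k).abs_dirDeriv_le _ _ _ _).2)
    (fun j t ht => (hsol.hasDerivAt_deriv hfR hfI hgR hgI ht j).1)
    (fun j t ht => (hsol.hasDerivAt_deriv hfR hfI hgR hgI ht j).2)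

theorem IsSolution.exists_isEquilibrium_decay (hτ : ∀ j k, 0 ≤ τ j k)
    (hf : ∀ j, CondH1 (fR j) (fI j) (lRR j) (lRI j) (lIR j) (lII j))
    (hg : ∀ j, CondH2 (gR j) (gI j) (mRR j) (mRI j) (mIR j) (mII j))
    (hξ : ∀ j, 0 < ξ j) (hφ : ∀ j, 0 < φ j) (hε : 0 < ε)
    (hcR : ∀ k, ξ k * (-(d k) + ε) + gainR ξ φ aR aI lRR lIR k
      + ∑ j, delayR ξ φ bR bI mRR mIR j k * Real.exp (ε * τ j k) ≤ 0)
    (hcI : ∀ k, φ k * (-(d k) + ε) + gainI ξ φ aR aI lII lRI k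
      + ∑ j, delayI ξ φ bR bI mRI mII j k * Real.exp (ε * τ j k) ≤ 0)
    (hsol : IsSolution n d aR aI bR bI τ uR uI fR fI gR gI zR zI) :
    ∃ c, 0 < c ∧ ∃ wR wI : Fin n → ℝ, IsEquilibrium n d aR aI bR bI uR uI fR fI gR gI wR wI ∧
      ∀ t, 0 ≤ t →
        weightedNorm ξ φ (fun j => zR j t - wR j) (fun j => zI j t - wI j)
          ≤ c * Real.exp (-ε * t) ∧
        weightedNorm ξ φ (fun j => deriv (zR j) t) (fun j => deriv (zI j) t)
          ≤ c * Real.exp (-ε * t) := by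
  obtain ⟨C, hC⟩ := hsol.exists_weightedNorm_deriv_le hτ hf hg (fun j => (hξ j).le)
    (fun j => (hφ j).le) hcR hcI
  have hC0 : 0 ≤ C := by
    simpa using (weightedNorm_nonneg (fun j => (hξ j).le) (fun j => (hφ j).le) _ _).trans
      (hC 0 le_rfl)
  have hXb : ∀ j t, 0 ≤ t → |deriv (zR j) t| ≤ C / ξ j * Real.exp (-ε * t) := fun j t ht => by
    rw [div_mul_eq_mul_div, le_div_iff₀ (hξ j), mul_comm]
    exact (mul_abs_le_weightedNorm_left (fun j => (hξ j).le) (fun j => (hφ j).le) _ _ j).trans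
      (hC t ht)
  have hYb : ∀ j t, 0 ≤ t → |deriv (zI j) t| ≤ C / φ j * Real.exp (-ε * t) := fun j t ht => by
    rw [div_mul_eq_mul_div, le_div_iff₀ (hφ j), mul_comm]
    exact (mul_abs_le_weightedNorm_right (fun j => (hξ j).le) (fun j => (hφ j).le) _ _ j).trans
      (hC t ht)
  choose wR hwR using fun j =>
    exists_abs_sub_le_of_abs_deriv_le hε ((hsol.1 j).differentiable one_ne_zero) (hXb j)
  choose wI hwI using fun j =>
    exists_abs_sub_le_of_abs_deriv_le hε ((hsol.2.1 j).differentiable one_ne_zero) (hYb j)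
  have hw : IsEquilibrium n d aR aI bR bI uR uI fR fI gR gI wR wI :=
    hsol.isEquilibrium_of_tendsto (fun k => (hf k).1.continuous) (fun k => (hf k).2.1.continuous)
      (fun k => (hg k).1.continuous) (fun k => (hg k).2.1.continuous)
      (fun j => tendsto_of_abs_sub_le_exp hε (hwR j))
      (fun j => tendsto_of_abs_sub_le_exp hε (hwI j))
      (fun j => tendsto_of_abs_sub_le_exp hε (by simpa using hXb j))
      (fun j => tendsto_of_abs_sub_le_exp hε (by simpa using hYb j))
  refine ⟨(1 + 2 * n / ε) * C + 1, by positivity, wR, wI, hw, fun t ht => ?_⟩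
  have he := Real.exp_pos (-ε * t)
  have hsplit : ((1 + 2 * n / ε) * C + 1) * Real.exp (-ε * t)
      = 2 * n * (C / ε * Real.exp (-ε * t)) + C * Real.exp (-ε * t) + Real.exp (-ε * t) := by
    field_simp
    ring
  have hdist := weightedNorm_le_of_forall (ξ := ξ) (φ := φ) (B := C / ε * Real.exp (-ε * t))
    (x := fun j => zR j t - wR j) (y := fun j => zI j t - wI j)
    (fun j => (mul_le_mul_of_nonneg_left (hwR j t ht) (hξ j).le).trans_eq
      (by field_simp [(hξ j).ne']))
    (fun j => (mul_le_mul_of_nonneg_left (hwI j t ht) (hφ j).le).trans_eq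
      (by field_simp [(hφ j).ne']))
  have hCe : 0 ≤ C / ε * Real.exp (-ε * t) := by positivity
  constructor <;> nlinarith [hC t ht]


end Solutions

end Network

theorem stmt3_general
    (n : ℕ)
    (d : Fin n → ℝ)
    (aR aI bR bI τ : Fin n → Fin n → ℝ) (hτ : ∀ j k, 0 ≤ τ j k)
    (uR uI : Fin n → ℝ)
    (fR fI gR gI : Fin n → ℝ → ℝ → ℝ)
    (lRR lRI lIR lII mRR mRI mIR mII : Fin n → ℝ)
    (hf : ∀ j, CondH1 (fR j) (fI j) (lRR j) (lRI j) (lIR j) (lII j))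
    (hg : ∀ j, CondH2 (gR j) (gI j) (mRR j) (mRI j) (mIR j) (mII j))
    (ξ φ : Fin n → ℝ) (hξ : ∀ j, 0 < ξ j) (hφ : ∀ j, 0 < φ j)
    (ε : ℝ) (hε : 0 < ε)
    (hT7 : ∀ k : Fin n,
      ξ k * (-(d k) + ε)
      + max (ξ k * aR k k + (∑ j ∈ Finset.univ.erase k, ξ j * |aR j k|)
             + (∑ j, φ j * |aI j k|)) 0 * lRR k
      + max (-(ξ k * aI k k) + (∑ j ∈ Finset.univ.erase k, ξ j * |aI j k|)
             + (∑ j, φ j * |aR j k|)) 0 * lIR k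
      + (∑ j, (ξ j * (|bR j k| * mRR k + |bI j k| * mIR k)
               + φ j * (|bR j k| * mIR k + |bI j k| * mRR k)) * Real.exp (ε * τ j k))
      ≤ 0)
    (hT8 : ∀ k : Fin n,
      φ k * (-(d k) + ε)
      + max (φ k * aR k k + (∑ j ∈ Finset.univ.erase k, φ j * |aR j k|)
             + (∑ j, ξ j * |aI j k|)) 0 * lII k
      + max (φ k * aI k k + (∑ j ∈ Finset.univ.erase k, φ j * |aI j k|)
             + (∑ j, ξ j * |aR j k|)) 0 * lRI k
      + (∑ j, (ξ j * (|bR j k| * mRI k + |bI j k| * mII k)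
               + φ j * (|bR j k| * mII k + |bI j k| * mRI k)) * Real.exp (ε * τ j k))
      ≤ 0)
    (hsol : ∃ zR zI, IsSolution n d aR aI bR bI τ uR uI fR fI gR gI zR zI) :
    ∃ zbR zbI : Fin n → ℝ,
      IsEquilibrium n d aR aI bR bI uR uI fR fI gR gI zbR zbI ∧
      (∀ wR wI : Fin n → ℝ,
        IsEquilibrium n d aR aI bR bI uR uI fR fI gR gI wR wI → wR = zbR ∧ wI = zbI) ∧
      (∀ zR zI : Fin n → ℝ → ℝ,
        IsSolution n d aR aI bR bI τ uR uI fR fI gR gI zR zI →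
        ∃ c : ℝ, 0 < c ∧ ∀ t : ℝ, 0 ≤ t →
          ((∑ j, ξ j * |zR j t - zbR j|) + (∑ j, φ j * |zI j t - zbI j|)
              ≤ c * Real.exp (-ε * t)) ∧
          ((∑ j, ξ j * |deriv (zR j) t|) + (∑ j, φ j * |deriv (zI j) t|)
              ≤ c * Real.exp (-ε * t))) := by
  have hcR : ∀ k, ξ k * (-(d k) + ε) + gainR ξ φ aR aI lRR lIR k
      + ∑ j, delayR ξ φ bR bI mRR mIR j k * Real.exp (ε * τ j k) ≤ 0 := fun k => by
    simp only [gainR, colSum, delayR, abs_neg, mul_neg]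
    linarith [hT7 k]
  have hcI : ∀ k, φ k * (-(d k) + ε) + gainI ξ φ aR aI lII lRI k
      + ∑ j, delayI ξ φ bR bI mRI mII j k * Real.exp (ε * τ j k) ≤ 0 := fun k => by
    simp only [gainI, colSum, delayI]
    linarith [hT8 k]
  obtain ⟨zR₀, zI₀, hsol₀⟩ := hsol
  obtain ⟨-, -, zbR, zbI, hzb, -⟩ :=
    hsol₀.exists_isEquilibrium_decay hτ hf hg hξ hφ hε hcR hcI
  refine ⟨zbR, zbI, hzb, fun wR wI hw => hw.eq hτ hf hg hξ hφ hε hcR hcI hzb, fun zR zI hs => ?_⟩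
  obtain ⟨c, hc, wR, wI, hw, hbound⟩ := hs.exists_isEquilibrium_decay hτ hf hg hξ hφ hε hcR hcI
  obtain ⟨rfl, rfl⟩ := hw.eq hτ hf hg hξ hφ hε hcR hcI hzb
  exact ⟨c, hc, hbound⟩

theorem stmt3
    (n : ℕ) (hn : 1 ≤ n)
    (d : Fin n → ℝ) (hd : ∀ j, 0 < d j)
    (aR aI bR bI τ : Fin n → Fin n → ℝ) (hτ : ∀ j k, 0 ≤ τ j k)
    (uR uI : Fin n → ℝ)
    (fR fI gR gI : Fin n → ℝ → ℝ → ℝ)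
    (lRR lRI lIR lII mRR mRI mIR mII : Fin n → ℝ)
    (hl : ∀ j, 0 < lRR j ∧ 0 < lRI j ∧ 0 < lIR j ∧ 0 < lII j)
    (hm : ∀ j, 0 < mRR j ∧ 0 < mRI j ∧ 0 < mIR j ∧ 0 < mII j)
    (hf : ∀ j, CondH1 (fR j) (fI j) (lRR j) (lRI j) (lIR j) (lII j))
    (hg : ∀ j, CondH2 (gR j) (gI j) (mRR j) (mRI j) (mIR j) (mII j))
    (ξ φ : Fin n → ℝ) (hξ : ∀ j, 0 < ξ j) (hφ : ∀ j, 0 < φ j)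
    (ε : ℝ) (hε : 0 < ε)
    (hT7 : ∀ k : Fin n,
      ξ k * (-(d k) + ε)
      + max (ξ k * aR k k + (∑ j ∈ Finset.univ.erase k, ξ j * |aR j k|)
             + (∑ j, φ j * |aI j k|)) 0 * lRR k
      + max (-(ξ k * aI k k) + (∑ j ∈ Finset.univ.erase k, ξ j * |aI j k|)
             + (∑ j, φ j * |aR j k|)) 0 * lIR k
      + (∑ j, (ξ j * (|bR j k| * mRR k + |bI j k| * mIR k)
               + φ j * (|bR j k| * mIR k + |bI j k| * mRR k)) * Real.exp (ε * τ j k))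
      ≤ 0)
    (hT8 : ∀ k : Fin n,
      φ k * (-(d k) + ε)
      + max (φ k * aR k k + (∑ j ∈ Finset.univ.erase k, φ j * |aR j k|)
             + (∑ j, ξ j * |aI j k|)) 0 * lII k
      + max (φ k * aI k k + (∑ j ∈ Finset.univ.erase k, φ j * |aI j k|)
             + (∑ j, ξ j * |aR j k|)) 0 * lRI k
      + (∑ j, (ξ j * (|bR j k| * mRI k + |bI j k| * mII k)
               + φ j * (|bR j k| * mII k + |bI j k| * mRI k)) * Real.exp (ε * τ j k))
      ≤ 0)
    (hsol : ∃ zR zI, IsSolution n d aR aI bR bI τ uR uI fR fI gR gI zR zI) :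
    ∃ zbR zbI : Fin n → ℝ,
      IsEquilibrium n d aR aI bR bI uR uI fR fI gR gI zbR zbI ∧
      (∀ wR wI : Fin n → ℝ,
        IsEquilibrium n d aR aI bR bI uR uI fR fI gR gI wR wI → wR = zbR ∧ wI = zbI) ∧
      (∀ zR zI : Fin n → ℝ → ℝ,
        IsSolution n d aR aI bR bI τ uR uI fR fI gR gI zR zI →
        ∃ c : ℝ, 0 < c ∧ ∀ t : ℝ, 0 ≤ t →
          ((∑ j, ξ j * |zR j t - zbR j|) + (∑ j, φ j * |zI j t - zbI j|)
              ≤ c * Real.exp (-ε * t)) ∧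
          ((∑ j, ξ j * |deriv (zR j) t|) + (∑ j, φ j * |deriv (zI j) t|)
              ≤ c * Real.exp (-ε * t))) :=
  stmt3_general n d aR aI bR bI τ hτ uR uI fR fI gR gI lRR lRI lIR lII mRR mRI mIR mII hf hg ξ φ hξ
    hφ ε hε hT7 hT8 hsol
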